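/- arXiv:2511.13137 — 2 statements merged into one kernel-verified Lean document; each statement's English description precedes it below -/
import Mathlib

section
/- VLB decomposition for a Markov chain: if q(z_{1:K}|z₀) = ∏ₖ q(z_k|z_{k-1}) is Markov and p_θ(z_{0:K}) = p(z_K) ∏ₖ p_θ(z_{k-1}|z_k), then E_q[ log( q(z_{1:K}|z₀)/p_θ(z_{0:K}) ) ] = E_q[ D_KL(q(z_K|z₀) ∥ p(z_K)) + Σₖ₌₂ᴷ D_KL(q(z_{k-1}|z_k, z₀) ∥ p_θ(z_{k-1}|z_k)) − log p_θ(z₀|z₁) ]. -/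
/-!
Along a path, Bayes' rule rewrites each forward factor as
`q(z_k | z_{k-1}) = q(z_{k-1} | z_k, z₀) q(z_k | z₀) / q(z_{k-1} | z₀)`, and the marginals
telescope: `log q(z_{1:K} | z₀) = log q(z_K | z₀) + ∑_k log q(z_{k-1} | z_k, z₀)`. Paired with the
matching factor of `log p_θ(z_{0:K})`, each term depends only on `(z_{k-1}, z_k)`, whose joint law
under `q` is `q(z_k | z₀) q(z_{k-1} | z_k, z₀)`; its expectation is therefore an expected KL
divergence. For `k = 1` the reverse conditional is the point mass at `z₀`, and that divergence is
`-E log p_θ(z₀ | z₁)`.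
-/

open Finset

variable {S : Type*}

/-- Full trajectory `z_0, z_1, …, z_K` obtained from the initial point `z₀` and the
latent path `z : Fin K → S` (so `fullz K z₀ z k = z_k`). -/
def fullz (K : ℕ) (z₀ : S) (z : Fin K → S) (k : ℕ) : S :=
  if h : k = 0 then z₀ else if h2 : k - 1 < K then z ⟨k - 1, h2⟩ else z₀

/-- Forward (Markov) path probability `q(z_{1:K} | z₀) = ∏_{k=1}^K q(z_k | z_{k-1})`. -/
def qpath (K : ℕ) (z₀ : S) (qstep : ℕ → S → S → ℝ) (z : Fin K → S) : ℝ :=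
  ∏ k ∈ range K, qstep (k + 1) (fullz K z₀ z k) (fullz K z₀ z (k + 1))

/-- Reverse model path probability `p_θ(z_{0:K}) = p(z_K) ∏_{k=1}^K p_θ(z_{k-1} | z_k)`. -/
def ppath (K : ℕ) (z₀ : S) (pK : S → ℝ) (pstep : ℕ → S → S → ℝ) (z : Fin K → S) : ℝ :=
  pK (fullz K z₀ z K) * ∏ k ∈ range K, pstep (k + 1) (fullz K z₀ z (k + 1)) (fullz K z₀ z k)

/-- Marginal `q(z_k = x | z₀)`. -/
def qmarg [Fintype S] [DecidableEq S] (K : ℕ) (z₀ : S) (qstep : ℕ → S → S → ℝ)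
    (k : ℕ) (x : S) : ℝ :=
  ∑ z : Fin K → S, if fullz K z₀ z k = x then qpath K z₀ qstep z else 0

/-- Reverse conditional `q(z_{k-1} = y | z_k = x, z₀)` obtained from Bayes' rule and the
Markov property. -/
noncomputable def qpost [Fintype S] [DecidableEq S] (K : ℕ) (z₀ : S) (qstep : ℕ → S → S → ℝ)
    (k : ℕ) (x y : S) : ℝ :=
  qstep k y x * qmarg K z₀ qstep (k - 1) y / qmarg K z₀ qstep k x

/-- Kullback–Leibler divergence between two distributions on a finite set. -/
noncomputable def klFin [Fintype S] (f g : S → ℝ) : ℝ :=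
  ∑ x : S, f x * Real.log (f x / g x)


section Trajectory

variable {K k : ℕ} {z₀ : S}

@[simp]
lemma fullz_zero (z : Fin K → S) : fullz K z₀ z 0 = z₀ := rfl

lemma fullz_const {x : S} (hk : k ≠ 0) (hkK : k ≤ K) : fullz K z₀ (fun _ => x) k = x := by
  simp [fullz, hk, show k - 1 < K by omega]

lemma fullz_snoc_of_le (w : Fin K → S) (s : S) (hk : k ≤ K) :
    fullz (K + 1) z₀ (Fin.snoc w s) k = fullz K z₀ w k := by
  rcases Nat.eq_zero_or_pos k with rfl | hpos
  · rfl
  · simp only [fullz, dif_neg hpos.ne', dif_pos (show k - 1 < K by omega),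
      dif_pos (show k - 1 < K + 1 by omega)]
    exact Fin.snoc_castSucc (α := fun _ => S) _ _ ⟨k - 1, by omega⟩

lemma fullz_snoc_succ (w : Fin K → S) (s : S) : fullz (K + 1) z₀ (Fin.snoc w s) (K + 1) = s := by
  simp only [fullz, dif_neg K.succ_ne_zero, dif_pos (show K + 1 - 1 < K + 1 by omega)]
  exact Fin.snoc_last (α := fun _ => S) _ _

lemma qpath_snoc (qstep : ℕ → S → S → ℝ) (w : Fin K → S) (s : S) :
    qpath (K + 1) z₀ qstep (Fin.snoc w s) =
      qpath K z₀ qstep w * qstep (K + 1) (fullz K z₀ w K) s := by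
  rw [qpath, prod_range_succ, fullz_snoc_succ, fullz_snoc_of_le w s le_rfl]
  congr 1
  refine prod_congr rfl fun i hi => ?_
  have hi : i < K := mem_range.mp hi
  rw [fullz_snoc_of_le w s hi.le, fullz_snoc_of_le w s hi]

lemma qpath_pos {qstep : ℕ → S → S → ℝ} (hq_pos : ∀ k x y, 0 < qstep k x y) (z : Fin K → S) :
    0 < qpath K z₀ qstep z :=
  prod_pos fun _ _ => hq_pos _ _ _

lemma ppath_pos {pK : S → ℝ} {pstep : ℕ → S → S → ℝ} (hpK_pos : ∀ x, 0 < pK x)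
    (hp_pos : ∀ k x y, 0 < pstep k x y) (z : Fin K → S) : 0 < ppath K z₀ pK pstep z :=
  mul_pos (hpK_pos _) (prod_pos fun _ _ => hp_pos _ _ _)

lemma log_ppath {pK : S → ℝ} {pstep : ℕ → S → S → ℝ} (hpK_pos : ∀ x, 0 < pK x)
    (hp_pos : ∀ k x y, 0 < pstep k x y) (z : Fin K → S) :
    Real.log (ppath K z₀ pK pstep z) = Real.log (pK (fullz K z₀ z K)) +
      ∑ k ∈ range K, Real.log (pstep (k + 1) (fullz K z₀ z (k + 1)) (fullz K z₀ z k)) := by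
  rw [ppath, Real.log_mul (hpK_pos _).ne' (prod_pos fun _ _ => hp_pos _ _ _).ne',
    Real.log_prod fun _ _ => (hp_pos _ _ _).ne']

variable [Fintype S]

lemma sum_fin_succ_pi_eq_sum_snoc (f : (Fin (K + 1) → S) → ℝ) :
    ∑ z, f z = ∑ w : Fin K → S, ∑ s, f (Fin.snoc w s) := by
  rw [← (Fin.snocEquiv fun _ => S).sum_comp, Fintype.sum_prod_type, sum_comm]
  rfl

lemma sum_qpath_succ_mul (qstep : ℕ → S → S → ℝ) (f : (Fin (K + 1) → S) → ℝ) :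
    ∑ z, qpath (K + 1) z₀ qstep z * f z =
      ∑ w, qpath K z₀ qstep w * ∑ s, qstep (K + 1) (fullz K z₀ w K) s * f (Fin.snoc w s) := by
  simp only [sum_fin_succ_pi_eq_sum_snoc, qpath_snoc, mul_sum, mul_assoc]

end Trajectory

section ForwardChain

variable [Fintype S] {K k : ℕ} {z₀ : S} {qstep : ℕ → S → S → ℝ}

lemma sum_qpath (hq_sum : ∀ k x, ∑ y, qstep k x y = 1) :
    ∑ z : Fin K → S, qpath K z₀ qstep z = 1 := by
  induction K with
  | zero => simp [qpath]
  | succ K ih => simpa [hq_sum, ih] using sum_qpath_succ_mul (K := K) (z₀ := z₀) qstep (fun _ => 1)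

lemma sum_qpath_mul_eq_of_le (hq_sum : ∀ k x, ∑ y, qstep k x y = 1) {f : (ℕ → S) → ℝ}
    (hf : ∀ Z Z' : ℕ → S, (∀ i ≤ k, Z i = Z' i) → f Z = f Z') (hk : k ≤ K) :
    ∑ z : Fin K → S, qpath K z₀ qstep z * f (fullz K z₀ z) =
      ∑ z : Fin k → S, qpath k z₀ qstep z * f (fullz k z₀ z) := by
  induction K, hk using Nat.le_induction with
  | base => rfl
  | succ K hkK ih =>
    rw [sum_qpath_succ_mul, ← ih]
    refine sum_congr rfl fun w _ => ?_
    have hfw : ∀ s, f (fullz (K + 1) z₀ (Fin.snoc w s)) = f (fullz K z₀ w) := fun s =>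
      hf _ _ fun i hi => fullz_snoc_of_le w s (hi.trans hkK)
    simp only [hfw, ← sum_mul, hq_sum, one_mul]

end ForwardChain

section Marginals

variable [Fintype S] [DecidableEq S] {K k : ℕ} {z₀ : S} {qstep : ℕ → S → S → ℝ}

lemma sum_qpath_mul_fullz (f : S → ℝ) :
    ∑ z : Fin K → S, qpath K z₀ qstep z * f (fullz K z₀ z k) = ∑ x, qmarg K z₀ qstep k x * f x := by
  simp only [qmarg, sum_mul, ite_mul, zero_mul]
  rw [sum_comm]
  simp

lemma qmarg_zero (hq_sum : ∀ k x, ∑ y, qstep k x y = 1) (x : S) :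
    qmarg K z₀ qstep 0 x = if x = z₀ then 1 else 0 := by
  split_ifs with h
  · subst h
    simp [qmarg, sum_qpath hq_sum]
  · simp [qmarg, Ne.symm h]

lemma qmarg_fullz_pos (hq_pos : ∀ k x y, 0 < qstep k x y) (z : Fin K → S) :
    0 < qmarg K z₀ qstep k (fullz K z₀ z k) := by
  have hnonneg : ∀ z' ∈ univ, 0 ≤ if fullz K z₀ z' k = fullz K z₀ z k
      then qpath K z₀ qstep z' else 0 := fun z' _ => by
    split_ifs
    exacts [(qpath_pos hq_pos z').le, le_rfl]
  exact (qpath_pos hq_pos z).trans_le (by simpa [qmarg] using single_le_sum hnonneg (mem_univ z))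

lemma qmarg_succ_pos (hq_pos : ∀ k x y, 0 < qstep k x y) (hk : k < K) (x : S) :
    0 < qmarg K z₀ qstep (k + 1) x := by
  simpa [fullz_const k.succ_ne_zero hk] using
    qmarg_fullz_pos (k := k + 1) (z₀ := z₀) hq_pos (fun _ : Fin K => x)

lemma sum_qpath_mul_step (hq_sum : ∀ k x, ∑ y, qstep k x y = 1) (hk : k < K) (g : S → S → ℝ) :
    ∑ z : Fin K → S, qpath K z₀ qstep z * g (fullz K z₀ z k) (fullz K z₀ z (k + 1)) =
      ∑ y, qmarg K z₀ qstep k y * ∑ x, qstep (k + 1) y x * g y x := by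
  rw [sum_qpath_mul_eq_of_le hq_sum (f := fun Z => g (Z k) (Z (k + 1)))
      (fun Z Z' h => by rw [h k k.le_succ, h (k + 1) le_rfl]) hk,
    sum_qpath_succ_mul]
  simp only [fullz_snoc_succ, fullz_snoc_of_le _ _ le_rfl]
  rw [← sum_qpath_mul_fullz,
    ← sum_qpath_mul_eq_of_le hq_sum (f := fun Z => ∑ x, qstep (k + 1) (Z k) x * g (Z k) x)
      (fun Z Z' h => by rw [h k le_rfl]) hk.le]

lemma qmarg_one (hq_sum : ∀ k x, ∑ y, qstep k x y = 1) (hK : 0 < K) (x : S) :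
    qmarg K z₀ qstep 1 x = qstep 1 z₀ x := by
  have h := sum_qpath_mul_step (z₀ := z₀) hq_sum hK fun _ x' => if x' = x then 1 else 0
  simp only [qmarg_zero hq_sum, mul_ite, mul_one, mul_zero, sum_ite_eq', mem_univ, if_true,
    ite_mul, one_mul, zero_mul] at h
  simpa [qmarg] using h

end Marginals

lemma mul_log_div_eq_mul_sub {a b : ℝ} (hb : b ≠ 0) :
    a * Real.log (a / b) = a * (Real.log a - Real.log b) := by
  rcases eq_or_ne a 0 with rfl | ha
  · simp
  · rw [Real.log_div ha hb]

lemma klFin_eq_sum_mul_sub [Fintype S] (f : S → ℝ) {g : S → ℝ} (hg : ∀ x, g x ≠ 0) :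
    klFin f g = ∑ x, f x * (Real.log (f x) - Real.log (g x)) :=
  sum_congr rfl fun x _ => mul_log_div_eq_mul_sub (hg x)

lemma klFin_ite_eq [Fintype S] [DecidableEq S] (a : S) (g : S → ℝ) :
    klFin (fun y => if y = a then 1 else 0) g = -Real.log (g a) := by
  simp [klFin]

lemma sum_range_succ_eq_add_sum_Icc {M : Type*} [AddCommMonoid M] (f : ℕ → M) {K : ℕ}
    (hK : 1 ≤ K) : ∑ k ∈ range K, f (k + 1) = f 1 + ∑ k ∈ Icc 2 K, f k := by
  rw [range_eq_Ico, sum_Ico_add' f 0 K 1, zero_add, sum_eq_sum_Ico_succ_bot (by omega),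
    Ico_add_one_right_eq_Icc]

section Posterior

variable [Fintype S] [DecidableEq S] {K k : ℕ} {z₀ : S} {qstep : ℕ → S → S → ℝ}

lemma qmarg_mul_qpost {x : S} (hx : qmarg K z₀ qstep (k + 1) x ≠ 0) (y : S) :
    qmarg K z₀ qstep (k + 1) x * qpost K z₀ qstep (k + 1) x y =
      qmarg K z₀ qstep k y * qstep (k + 1) y x := by
  rw [qpost, Nat.add_sub_cancel]
  field_simp

lemma sum_qpath_mul_step_eq_qpost (hq_pos : ∀ k x y, 0 < qstep k x y)
    (hq_sum : ∀ k x, ∑ y, qstep k x y = 1) (hk : k < K) (g : S → S → ℝ) :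
    ∑ z : Fin K → S, qpath K z₀ qstep z * g (fullz K z₀ z k) (fullz K z₀ z (k + 1)) =
      ∑ x, qmarg K z₀ qstep (k + 1) x * ∑ y, qpost K z₀ qstep (k + 1) x y * g y x := by
  rw [sum_qpath_mul_step hq_sum hk]
  simp only [mul_sum, ← mul_assoc, qmarg_mul_qpost (qmarg_succ_pos hq_pos hk _).ne']
  exact sum_comm

lemma qpost_one (hq_pos : ∀ k x y, 0 < qstep k x y) (hq_sum : ∀ k x, ∑ y, qstep k x y = 1)
    (hK : 0 < K) (x : S) : qpost K z₀ qstep 1 x = fun y => if y = z₀ then 1 else 0 := by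
  funext y
  rw [qpost, qmarg_one hq_sum hK, Nat.sub_self, qmarg_zero hq_sum]
  split_ifs with h
  · subst h
    simp [(hq_pos 1 y x).ne']
  · simp

lemma log_qpath (hq_pos : ∀ k x y, 0 < qstep k x y) (hq_sum : ∀ k x, ∑ y, qstep k x y = 1)
    (z : Fin K → S) :
    Real.log (qpath K z₀ qstep z) = Real.log (qmarg K z₀ qstep K (fullz K z₀ z K)) +
      ∑ k ∈ range K,
        Real.log (qpost K z₀ qstep (k + 1) (fullz K z₀ z (k + 1)) (fullz K z₀ z k)) := by
  set Z := fullz K z₀ z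
  set M : ℕ → ℝ := fun k => Real.log (qmarg K z₀ qstep k (Z k))
  have hstep (k : ℕ) : Real.log (qstep (k + 1) (Z k) (Z (k + 1))) =
      Real.log (qpost K z₀ qstep (k + 1) (Z (k + 1)) (Z k)) + (M (k + 1) - M k) := by
    have hMk := qmarg_fullz_pos (k := k) (z₀ := z₀) hq_pos z
    have hMk' := qmarg_fullz_pos (k := k + 1) (z₀ := z₀) hq_pos z
    rw [qpost, Nat.add_sub_cancel, Real.log_div (mul_pos (hq_pos _ _ _) hMk).ne' hMk'.ne',
      Real.log_mul (hq_pos _ _ _).ne' hMk.ne']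
    ring
  have hM0 : M 0 = 0 := by simp [M, Z, qmarg_zero hq_sum]
  rw [qpath, Real.log_prod fun k _ => (hq_pos _ _ _).ne', sum_congr rfl fun k _ => hstep k,
    sum_add_distrib, sum_range_sub, hM0, sub_zero, add_comm]

end Posterior

theorem sum_qpath_mul_log_div_ppath [Fintype S] [DecidableEq S] {K : ℕ} {z₀ : S}
    {qstep : ℕ → S → S → ℝ} {pK : S → ℝ} {pstep : ℕ → S → S → ℝ}
    (hq_pos : ∀ k x y, 0 < qstep k x y) (hq_sum : ∀ k x, ∑ y, qstep k x y = 1)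
    (hpK_pos : ∀ x, 0 < pK x) (hp_pos : ∀ k x y, 0 < pstep k x y) :
    ∑ z : Fin K → S, qpath K z₀ qstep z * Real.log (qpath K z₀ qstep z / ppath K z₀ pK pstep z) =
      klFin (qmarg K z₀ qstep K) pK + ∑ k ∈ range K, ∑ x,
        qmarg K z₀ qstep (k + 1) x * klFin (qpost K z₀ qstep (k + 1) x) (pstep (k + 1) x) := by
  have hlog (z : Fin K → S) :
      Real.log (qpath K z₀ qstep z / ppath K z₀ pK pstep z) =
        (Real.log (qmarg K z₀ qstep K (fullz K z₀ z K)) - Real.log (pK (fullz K z₀ z K))) +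
          ∑ k ∈ range K,
            (Real.log (qpost K z₀ qstep (k + 1) (fullz K z₀ z (k + 1)) (fullz K z₀ z k)) -
              Real.log (pstep (k + 1) (fullz K z₀ z (k + 1)) (fullz K z₀ z k))) := by
    rw [Real.log_div (qpath_pos hq_pos z).ne' (ppath_pos hpK_pos hp_pos z).ne',
      log_qpath hq_pos hq_sum, log_ppath hpK_pos hp_pos, sum_sub_distrib]
    ring
  simp only [hlog, mul_add, mul_sum, sum_add_distrib]
  rw [sum_comm (s := univ) (t := range K)]
  congr 1
  · rw [sum_qpath_mul_fullz fun x => Real.log (qmarg K z₀ qstep K x) - Real.log (pK x),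
      klFin_eq_sum_mul_sub _ fun x => (hpK_pos x).ne']
  · refine sum_congr rfl fun k hk => ?_
    rw [sum_qpath_mul_step_eq_qpost hq_pos hq_sum (mem_range.mp hk) fun y x =>
      Real.log (qpost K z₀ qstep (k + 1) x y) - Real.log (pstep (k + 1) x y)]
    simp only [klFin_eq_sum_mul_sub _ fun y => (hp_pos _ _ y).ne']

theorem stmt_9_general [Fintype S] [DecidableEq S] (K : ℕ) (hK : 1 ≤ K) (z₀ : S)
    (qstep : ℕ → S → S → ℝ) (pK : S → ℝ) (pstep : ℕ → S → S → ℝ)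
    (hq_pos : ∀ k x y, 0 < qstep k x y) (hq_sum : ∀ k x, ∑ y : S, qstep k x y = 1)
    (hpK_pos : ∀ x, 0 < pK x) (hp_pos : ∀ k x y, 0 < pstep k x y) :
    ∑ z : Fin K → S, qpath K z₀ qstep z * Real.log (qpath K z₀ qstep z / ppath K z₀ pK pstep z) =
      klFin (qmarg K z₀ qstep K) pK +
        ∑ k ∈ Finset.Icc 2 K, ∑ x : S,
          qmarg K z₀ qstep k x * klFin (qpost K z₀ qstep k x) (fun y => pstep k x y) -
        ∑ x : S, qmarg K z₀ qstep 1 x * Real.log (pstep 1 x z₀) := by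
  rw [sum_qpath_mul_log_div_ppath hq_pos hq_sum hpK_pos hp_pos,
    sum_range_succ_eq_add_sum_Icc (fun k => ∑ x, qmarg K z₀ qstep k x *
      klFin (qpost K z₀ qstep k x) (pstep k x)) hK]
  simp only [qpost_one hq_pos hq_sum hK, klFin_ite_eq, mul_neg, sum_neg_distrib]
  ring

/-- VLB decomposition for a Markov chain: the expected log-ratio
`E_q[log(q(z_{1:K}|z₀)/p_θ(z_{0:K}))]` equals
`D_KL(q(z_K|z₀) ∥ p(z_K)) + Σ_{k=2}^K E_{q(z_k|z₀)} D_KL(q(z_{k-1}|z_k,z₀) ∥ p_θ(z_{k-1}|z_k))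
 - E_{q(z_1|z₀)}[log p_θ(z₀|z₁)]`. -/
theorem stmt_9 [Fintype S] [DecidableEq S] [Nonempty S] (K : ℕ) (hK : 1 ≤ K) (z₀ : S)
    (qstep : ℕ → S → S → ℝ) (pK : S → ℝ) (pstep : ℕ → S → S → ℝ)
    (hq_pos : ∀ k x y, 0 < qstep k x y) (hq_sum : ∀ k x, ∑ y : S, qstep k x y = 1)
    (hpK_pos : ∀ x, 0 < pK x) (hpK_sum : ∑ x : S, pK x = 1)
    (hp_pos : ∀ k x y, 0 < pstep k x y) (hp_sum : ∀ k x, ∑ y : S, pstep k x y = 1) :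
    ∑ z : Fin K → S, qpath K z₀ qstep z * Real.log (qpath K z₀ qstep z / ppath K z₀ pK pstep z) =
      klFin (qmarg K z₀ qstep K) pK +
        ∑ k ∈ Finset.Icc 2 K, ∑ x : S,
          qmarg K z₀ qstep k x * klFin (qpost K z₀ qstep k x) (fun y => pstep k x y) -
        ∑ x : S, qmarg K z₀ qstep 1 x * Real.log (pstep 1 x z₀) :=
  stmt_9_general K hK z₀ qstep pK pstep hq_pos hq_sum hpK_pos hp_pos
end

section
/- Linearization of quadratic cross terms: suppose for each i, Qᵢ(aᵢ) = αᵢ + βᵢ(aᵢ − aᵢ°)² + o((aᵢ − aᵢ°)²). Then for any symmetric coefficients μ_{ij}, the bilinear form Σ_{i,j} μ_{ij} Qᵢ(aᵢ) Qⱼ(aⱼ) = −Σ_{i,j} μ_{ij} αᵢ αⱼ + 2 Σᵢ (Σⱼ μ_{ij} αⱼ) Qᵢ(aᵢ) + o(‖a − a°‖²) as a → a°; i.e., up to second order, the quadratic term in the individual values reduces to an affine function of the individual values. -/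
open Asymptotics Filter Topology

/-! Writing `Bᵢ = Qᵢ(aᵢ) - αᵢ`, symmetry of `μ` turns the difference of the two sides into the
quadratic form `Σᵢⱼ μᵢⱼ Bᵢ Bⱼ`. Each `Bᵢ` is `O((aᵢ - aᵢ°)²) = O(‖a - a°‖²)` and tends to `0`,
so every product `Bᵢ Bⱼ` is `o(‖a - a°‖²)`. -/

lemma sum_mul_mul_sub_linearization {ι R : Type*} [Fintype ι] [CommRing R]
    (μ : ι → ι → R) (hμ : ∀ i j, μ i j = μ j i) (x α : ι → R) :
    (∑ i, ∑ j, μ i j * x i * x j) -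
        (-(∑ i, ∑ j, μ i j * α i * α j) + 2 * ∑ i, (∑ j, μ i j * α j) * x i) =
      ∑ i, ∑ j, μ i j * ((x i - α i) * (x j - α j)) := by
  have hswap : ∑ i, ∑ j, μ i j * α i * x j = ∑ i, ∑ j, μ i j * α j * x i := by
    rw [Finset.sum_comm]
    simp_rw [hμ]
  have hexpand : ∀ i j, μ i j * ((x i - α i) * (x j - α j)) =
      μ i j * x i * x j + μ i j * α i * α j - μ i j * α i * x j - μ i j * α j * x i := by
    intro i j
    ring
  simp only [hexpand, Finset.sum_sub_distrib, Finset.sum_add_distrib, Finset.sum_mul, hswap]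
  ring

lemma isBigO_sub_const_of_isLittleO_sub_affine {α : Type*} {l : Filter α} {f g : α → ℝ}
    {c b : ℝ} (h : (fun t => f t - (c + b * g t)) =o[l] g) :
    (fun t => f t - c) =O[l] g :=
  (h.isBigO.add ((isBigO_refl g l).const_mul_left b)).congr_left fun t => by ring

lemma EuclideanSpace.isBigO_sub_apply_sq {ι : Type*} [Fintype ι]
    (l : Filter (EuclideanSpace ℝ ι)) (x₀ : EuclideanSpace ℝ ι) (i : ι) :
    (fun x : EuclideanSpace ℝ ι => (x i - x₀ i) ^ 2) =O[l] fun x => ‖x - x₀‖ ^ 2 := by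
  have h := ((EuclideanSpace.proj (𝕜 := ℝ) i).isBigO_sub l x₀).norm_right
  simpa using h.pow 2

lemma isLittleO_sum_sum_mul_of_isBigO {α ι : Type*} [Fintype ι] {l : Filter α}
    {B : ι → α → ℝ} {g : α → ℝ} (hB : ∀ i, B i =O[l] g) (hg : Tendsto g l (𝓝 0))
    (μ : ι → ι → ℝ) :
    (fun x => ∑ i, ∑ j, μ i j * (B i x * B j x)) =o[l] g := by
  refine IsLittleO.fun_sum fun i _ => IsLittleO.fun_sum fun j _ => ?_
  refine IsLittleO.const_mul_left ?_ _
  simpa using (hB i).mul_isLittleO (isLittleO_one_iff ℝ |>.mpr <| (hB j).trans_tendsto hg)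

/-- Linearization of quadratic cross terms: if each `Qᵢ(aᵢ) = αᵢ + βᵢ(aᵢ-aᵢ°)² + o((aᵢ-aᵢ°)²)`,
then for symmetric coefficients `μᵢⱼ`,
`Σᵢⱼ μᵢⱼ Qᵢ(aᵢ) Qⱼ(aⱼ) = -Σᵢⱼ μᵢⱼ αᵢ αⱼ + 2 Σᵢ (Σⱼ μᵢⱼ αⱼ) Qᵢ(aᵢ) + o(‖a-a°‖²)` as `a → a°`. -/
theorem stmt_15 (N : ℕ) (Q : Fin N → ℝ → ℝ) (α β : Fin N → ℝ)
    (a₀ : EuclideanSpace ℝ (Fin N))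
    (hQ : ∀ i, (fun t : ℝ => Q i t - (α i + β i * (t - a₀ i) ^ 2))
        =o[nhds (a₀ i)] fun t => (t - a₀ i) ^ 2)
    (μ : Fin N → Fin N → ℝ) (hμ : ∀ i j, μ i j = μ j i) :
    (fun a : EuclideanSpace ℝ (Fin N) =>
        (∑ i, ∑ j, μ i j * Q i (a i) * Q j (a j)) -
          (-(∑ i, ∑ j, μ i j * α i * α j) + 2 * ∑ i, (∑ j, μ i j * α j) * Q i (a i)))
      =o[nhds a₀] fun a => ‖a - a₀‖ ^ 2 := by
  have hB : ∀ i, (fun a : EuclideanSpace ℝ (Fin N) => Q i (a i) - α i)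
      =O[𝓝 a₀] fun a => ‖a - a₀‖ ^ 2 := fun i =>
    ((isBigO_sub_const_of_isLittleO_sub_affine (hQ i)).comp_tendsto
      ((EuclideanSpace.proj i).continuous.tendsto a₀)).trans
      (EuclideanSpace.isBigO_sub_apply_sq _ a₀ i)
  have hg : Tendsto (fun a : EuclideanSpace ℝ (Fin N) => ‖a - a₀‖ ^ 2) (𝓝 a₀) (𝓝 0) := by
    simpa using (tendsto_norm_sub_self a₀).pow 2
  refine (isLittleO_sum_sum_mul_of_isBigO hB hg μ).congr_left fun a => ?_
  exact (sum_mul_mul_sub_linearization μ hμ (fun i => Q i (a i)) α).symm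
end
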